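/- If ∀X.A ≡ B ∧ C in Polymorphic System I, then there exist types B', C' such that B ≡ ∀X.B', C ≡ ∀X.C', and A ≡ B' ∧ C'. -/

import Mathlib

/-- Types of Polymorphic System I: variables, arrows, conjunctions, universal types. -/
inductive Ty : Type
  | var : ℕ → Ty
  | arr : Ty → Ty → Ty
  | conj : Ty → Ty → Ty
  | all : ℕ → Ty → Ty
deriving DecidableEq

/-- Free type variables. -/
def ftv : Ty → Finset ℕ
  | .var X => {X}
  | .arr A B => ftv A ∪ ftv B
  | .conj A B => ftv A ∪ ftv B
  | .all X A => ftv A \ {X}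

/-- Type isomorphism ≡: the smallest congruence generated by the six isomorphisms of PSI. -/
inductive TyEquiv : Ty → Ty → Prop
  | comm (A B) : TyEquiv (.conj A B) (.conj B A)
  | assoc (A B C) : TyEquiv (.conj A (.conj B C)) (.conj (.conj A B) C)
  | distArr (A B C) : TyEquiv (.arr A (.conj B C)) (.conj (.arr A B) (.arr A C))
  | curry (A B C) : TyEquiv (.arr (.conj A B) C) (.arr A (.arr B C))
  | allArr (X A B) : X ∉ ftv A → TyEquiv (.all X (.arr A B)) (.arr A (.all X B))
  | allConj (X A B) : TyEquiv (.all X (.conj A B)) (.conj (.all X A) (.all X B))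
  | refl (A) : TyEquiv A A
  | symm {A B} : TyEquiv A B → TyEquiv B A
  | trans {A B C} : TyEquiv A B → TyEquiv B C → TyEquiv A C
  | congArr {A A' B B'} : TyEquiv A A' → TyEquiv B B' → TyEquiv (.arr A B) (.arr A' B')
  | congConj {A A' B B'} : TyEquiv A A' → TyEquiv B B' → TyEquiv (.conj A B) (.conj A' B')
  | congAll (X) {A B} : TyEquiv A B → TyEquiv (.all X A) (.all X B)

/-- Auxiliary for PF: turn ∀X⃗.(C ⇒ Y) into ∀X⃗.((A ∧ C) ⇒ Y). -/
def pushArr (A : Ty) : Ty → Ty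
  | .all X t => .all X (pushArr A t)
  | .arr C Y => .arr (.conj A C) Y
  | t => t

/-- Multiset of prime factors of a type. -/
def PF : Ty → Multiset Ty
  | .var X => {.var X}
  | .arr A B => (PF B).map (pushArr A)
  | .conj A B => PF A + PF B
  | .all X A => (PF A).map (.all X)

/-- Being of the form ∀X₁...∀Xₙ.(B ⇒ Y) with Y a type variable. -/
inductive IsPrimeForm : Ty → Prop
  | base (B Y) : IsPrimeForm (.arr B (.var Y))
  | step (X) {t} : IsPrimeForm t → IsPrimeForm (.all X t)

/-- Conjunction of a (nonempty) list of types, A₁ ∧ ... ∧ Aₙ. -/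
def conjList : List Ty → Ty
  | [] => .var 0
  | [A] => A
  | A :: l => .conj A (conjList l)

/-- ∀X₁...∀Xₙ.A -/
def allList (l : List ℕ) (A : Ty) : Ty := l.foldr .all A

/-- Substitution of a type for a type variable in a type. -/
def substTy (X : ℕ) (B : Ty) : Ty → Ty
  | .var Y => if Y = X then B else .var Y
  | .arr C D => .arr (substTy X B C) (substTy X B D)
  | .conj C D => .conj (substTy X B C) (substTy X B D)
  | .all Y C => if Y = X then .all Y C else .all Y (substTy X B C)

/-- Terms of PSI (Church style). -/
inductive Tm : Type
  | var : ℕ → Ty → Tm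
  | lam : ℕ → Ty → Tm → Tm
  | app : Tm → Tm → Tm
  | pair : Tm → Tm → Tm
  | proj : Ty → Tm → Tm
  | tlam : ℕ → Tm → Tm
  | tapp : Tm → Ty → Tm

/-- Substitution of a term for a term variable. -/
def substTm (x : ℕ) (s : Tm) : Tm → Tm
  | .var y A => if y = x then s else .var y A
  | .lam y A r => if y = x then .lam y A r else .lam y A (substTm x s r)
  | .app r t => .app (substTm x s r) (substTm x s t)
  | .pair r t => .pair (substTm x s r) (substTm x s t)
  | .proj A r => .proj A (substTm x s r)
  | .tlam X r => .tlam X (substTm x s r)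
  | .tapp r A => .tapp (substTm x s r) A

/-- Substitution of a type for a type variable in a term. -/
def substTyTm (X : ℕ) (B : Ty) : Tm → Tm
  | .var y A => .var y (substTy X B A)
  | .lam y A r => .lam y (substTy X B A) (substTyTm X B r)
  | .app r t => .app (substTyTm X B r) (substTyTm X B t)
  | .pair r t => .pair (substTyTm X B r) (substTyTm X B t)
  | .proj A r => .proj (substTy X B A) (substTyTm X B r)
  | .tlam Y r => if Y = X then .tlam Y r else .tlam Y (substTyTm X B r)
  | .tapp r A => .tapp (substTyTm X B r) (substTy X B A)

abbrev Ctx := List (ℕ × Ty)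

def ftvCtx (Γ : Ctx) : Finset ℕ := Γ.foldr (fun p s => ftv p.2 ∪ s) ∅

def substCtx (X : ℕ) (B : Ty) (Γ : Ctx) : Ctx := Γ.map (fun p => (p.1, substTy X B p.2))

/-- Typing relation of PSI. -/
inductive Typing : Ctx → Tm → Ty → Prop
  | ax {Γ x A} : (x, A) ∈ Γ → Typing Γ (.var x A) A
  | equiv {Γ r A B} : Typing Γ r A → TyEquiv A B → Typing Γ r B
  | arrI {Γ x A r B} : Typing ((x, A) :: Γ) r B → Typing Γ (.lam x A r) (.arr A B)
  | arrE {Γ r s A B} : Typing Γ r (.arr A B) → Typing Γ s A → Typing Γ (.app r s) B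
  | conjI {Γ r s A B} : Typing Γ r A → Typing Γ s B → Typing Γ (.pair r s) (.conj A B)
  | conjE {Γ r A B} : Typing Γ r (.conj A B) → Typing Γ (.proj A r) A
  | allI {Γ r X A} : Typing Γ r A → X ∉ ftvCtx Γ → Typing Γ (.tlam X r) (.all X A)
  | allE {Γ r X A B} : Typing Γ r (.all X A) → Typing Γ (.tapp r B) (substTy X B A)

/-- "r has type A" (context is redundant in Church style). -/
def HasTy (r : Tm) (A : Ty) : Prop := ∃ Γ, Typing Γ r A

/-- One-step structural equivalence ⇄ (symmetric, closed under all term contexts). -/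
inductive StEq : Tm → Tm → Prop
  | comm (r s) : StEq (.pair r s) (.pair s r)
  | assoc (r s t) : StEq (.pair r (.pair s t)) (.pair (.pair r s) t)
  | distLam (x A r s) : StEq (.lam x A (.pair r s)) (.pair (.lam x A r) (.lam x A s))
  | distApp (r s t) : StEq (.app (.pair r s) t) (.pair (.app r t) (.app s t))
  | curry (r s t) : StEq (.app r (.pair s t)) (.app (.app r s) t)
  | pcommII (X x A r) : X ∉ ftv A → StEq (.tlam X (.lam x A r)) (.lam x A (.tlam X r))
  | pcommEI (X x A B r) : X ∉ ftv A → StEq (.tapp (.lam x A r) B) (.lam x A (.tapp r B))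
  | pdistII (X r s) : StEq (.tlam X (.pair r s)) (.pair (.tlam X r) (.tlam X s))
  | pdistEI (r s A) : StEq (.tapp (.pair r s) A) (.pair (.tapp r A) (.tapp s A))
  | pdistIE (X A r) : StEq (.proj (.all X A) (.tlam X r)) (.tlam X (.proj A r))
  | pdistEE (X A B C r) : HasTy r (.all X (.conj B C)) →
      StEq (.tapp (.proj (.all X B) r) A) (.proj (substTy X A B) (.tapp r A))
  | symm {r s} : StEq r s → StEq s r
  | congLam (x A) {r s} : StEq r s → StEq (.lam x A r) (.lam x A s)
  | congAppL (t) {r s} : StEq r s → StEq (.app r t) (.app s t)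
  | congAppR (t) {r s} : StEq r s → StEq (.app t r) (.app t s)
  | congPairL (t) {r s} : StEq r s → StEq (.pair r t) (.pair s t)
  | congPairR (t) {r s} : StEq r s → StEq (.pair t r) (.pair t s)
  | congProj (A) {r s} : StEq r s → StEq (.proj A r) (.proj A s)
  | congTlam (X) {r s} : StEq r s → StEq (.tlam X r) (.tlam X s)
  | congTapp (A) {r s} : StEq r s → StEq (.tapp r A) (.tapp s A)

/-- One-step reduction ↪ (typed β-reductions and typed projection, closed under contexts). -/
inductive Red : Tm → Tm → Prop
  | beta (x A r s) : HasTy s A → Red (.app (.lam x A r) s) (substTm x s r)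
  | tbeta (X A r) : Red (.tapp (.tlam X r) A) (substTyTm X A r)
  | pi (A r s) : HasTy r A → Red (.proj A (.pair r s)) r
  | congLam (x A) {r s} : Red r s → Red (.lam x A r) (.lam x A s)
  | congAppL (t) {r s} : Red r s → Red (.app r t) (.app s t)
  | congAppR (t) {r s} : Red r s → Red (.app t r) (.app t s)
  | congPairL (t) {r s} : Red r s → Red (.pair r t) (.pair s t)
  | congPairR (t) {r s} : Red r s → Red (.pair t r) (.pair t s)
  | congProj (A) {r s} : Red r s → Red (.proj A r) (.proj A s)
  | congTlam (X) {r s} : Red r s → Red (.tlam X r) (.tlam X s)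
  | congTapp (A) {r s} : Red r s → Red (.tapp r A) (.tapp s A)

/-- ⇄*: reflexive-transitive closure of ⇄. -/
def SeqStar : Tm → Tm → Prop := Relation.ReflTransGen StEq

/-- The operational semantics → = ⇄* ∘ ↪ ∘ ⇄*. -/
def Step (r s : Tm) : Prop := ∃ r' s', SeqStar r r' ∧ Red r' s' ∧ SeqStar s' s

/-- Strong normalisation with respect to →. -/
def SN (r : Tm) : Prop := Acc (fun a b => Step b a) r

/-- The measure P on terms. -/
def Pm : Tm → ℕ
  | .var _ _ => 0
  | .lam _ _ r => Pm r
  | .app r _ => Pm r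
  | .pair r s => 1 + Pm r + Pm s
  | .proj _ r => Pm r
  | .tlam _ r => Pm r
  | .tapp r _ => Pm r

/-- The measure M on terms. -/
def Mm : Tm → ℕ
  | .var _ _ => 1
  | .lam _ _ r => 1 + Mm r + Pm r
  | .app r s => Mm r + Mm s + Pm r * Mm s
  | .pair r s => Mm r + Mm s
  | .proj _ r => 1 + Mm r + Pm r
  | .tlam _ r => 1 + Mm r + Pm r
  | .tapp r _ => 1 + Mm r + Pm r

/-! ### Auxiliary development: factor lists -/

/-- List of "distributive factors" of a type (no currying, no quantifier motion). -/
def factorsL : Ty → List Ty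
  | .var X => [.var X]
  | .arr A B => (factorsL B).map (.arr A)
  | .conj A B => factorsL A ++ factorsL B
  | .all X A => (factorsL A).map (.all X)

theorem factorsL_ne_nil : ∀ A, factorsL A ≠ []
  | .var _ => by simp [factorsL]
  | .arr A B => by simp [factorsL, factorsL_ne_nil B]
  | .conj A B => by simp [factorsL, factorsL_ne_nil A]
  | .all _ A => by simp [factorsL, factorsL_ne_nil A]

theorem conjList_cons (a : Ty) {l : List Ty} (h : l ≠ []) :
    conjList (a :: l) = .conj a (conjList l) := by
  cases l with
  | nil => exact absurd rfl h
  | cons b l => rfl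

theorem conjList_append : ∀ {l1 : List Ty} (l2 : List Ty), l1 ≠ [] → l2 ≠ [] →
    TyEquiv (conjList (l1 ++ l2)) (.conj (conjList l1) (conjList l2)) := by
  intro l1
  induction l1 with
  | nil => intro l2 h1 _; exact absurd rfl h1
  | cons a l ih =>
    intro l2 _ h2
    cases l with
    | nil => rw [List.singleton_append, conjList_cons a h2]; exact .refl _
    | cons b l' =>
      have hne : (b :: l') ≠ [] := by simp
      rw [List.cons_append, conjList_cons a (by simp), conjList_cons a hne]
      exact .trans (.congConj (.refl a) (ih l2 hne h2)) (.assoc ..)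

theorem conjList_map_arr (A : Ty) : ∀ {l : List Ty}, l ≠ [] →
    TyEquiv (.arr A (conjList l)) (conjList (l.map (.arr A))) := by
  intro l
  induction l with
  | nil => intro h; exact absurd rfl h
  | cons b l ih =>
    intro _
    cases l with
    | nil => exact .refl _
    | cons c l' =>
      have hne : (c :: l') ≠ [] := by simp
      rw [List.map_cons, conjList_cons b hne, conjList_cons (Ty.arr A b) (by simp)]
      exact .trans (.distArr ..) (.congConj (.refl _) (ih hne))

theorem conjList_map_all (X : ℕ) : ∀ {l : List Ty}, l ≠ [] →
    TyEquiv (.all X (conjList l)) (conjList (l.map (.all X))) := by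
  intro l
  induction l with
  | nil => intro h; exact absurd rfl h
  | cons b l ih =>
    intro _
    cases l with
    | nil => exact .refl _
    | cons c l' =>
      have hne : (c :: l') ≠ [] := by simp
      rw [List.map_cons, conjList_cons b hne, conjList_cons (Ty.all X b) (by simp)]
      exact .trans (.allConj ..) (.congConj (.refl _) (ih hne))

/-- Every type is equivalent to the conjunction of its factors. -/
theorem equiv_conjList_factorsL : ∀ A, TyEquiv A (conjList (factorsL A))
  | .var X => .refl _
  | .arr A B => by
      have := equiv_conjList_factorsL B
      exact .trans (.congArr (.refl A) this) (conjList_map_arr A (factorsL_ne_nil B))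
  | .conj A B => by
      have hA := equiv_conjList_factorsL A
      have hB := equiv_conjList_factorsL B
      exact .trans (.congConj hA hB)
        (.symm (conjList_append _ (factorsL_ne_nil A) (factorsL_ne_nil B)))
  | .all X A => by
      have := equiv_conjList_factorsL A
      exact .trans (.congAll X this) (conjList_map_all X (factorsL_ne_nil A))

theorem conjList_perm : ∀ {l l' : List Ty}, l.Perm l' → TyEquiv (conjList l) (conjList l') := by
  intro l l' h
  induction h with
  | nil => exact .refl _
  | @cons a l1 l2 h ih =>
    cases l1 with
    | nil =>
      have : l2 = [] := h.symm.eq_nil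
      subst this; exact .refl _
    | cons b t =>
      have h2 : l2 ≠ [] := by
        intro e; subst e; exact absurd h.eq_nil (by simp)
      rw [conjList_cons a (by simp), conjList_cons a h2]
      exact .congConj (.refl a) ih
  | @swap a b l =>
    cases l with
    | nil => exact .comm b a
    | cons c t =>
      have hne : (c :: t) ≠ [] := by simp
      rw [conjList_cons b (by simp), conjList_cons a hne,
          conjList_cons a (by simp), conjList_cons b hne]
      exact .trans (.assoc ..) (.trans (.congConj (.comm b a) (.refl _)) (.symm (.assoc ..)))
  | trans _ _ ih1 ih2 => exact .trans ih1 ih2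

theorem relRefl (s : Multiset Ty) : Multiset.Rel TyEquiv s s :=
  Multiset.rel_refl_of_refl_on fun x _ => .refl x

theorem relTrans : ∀ {s t u : Multiset Ty},
    Multiset.Rel TyEquiv s t → Multiset.Rel TyEquiv t u → Multiset.Rel TyEquiv s u := by
  intro s t u h1
  induction h1 generalizing u with
  | zero =>
    intro h2
    rw [Multiset.rel_zero_left.mp h2]
    exact Multiset.Rel.zero
  | @cons a b s' t' hab _ ih =>
    intro h2
    obtain ⟨c, u', hbc, h2', rfl⟩ := Multiset.rel_cons_left.mp h2
    exact Multiset.Rel.cons (hab.trans hbc) (ih h2')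

theorem relMapPointwise {f g : Ty → Ty} (hfg : ∀ a, TyEquiv (f a) (g a)) :
    ∀ (l : List Ty), Multiset.Rel TyEquiv ↑(l.map f) ↑(l.map g) := by
  intro l
  induction l with
  | nil => exact Multiset.Rel.zero
  | cons a l ih =>
    simp only [List.map_cons, ← Multiset.cons_coe]
    exact Multiset.Rel.cons (hfg a) ih

theorem relMapCong {f g : Ty → Ty} (hfg : ∀ a b, TyEquiv a b → TyEquiv (f a) (g b))
    {l l' : List Ty} (h : Multiset.Rel TyEquiv ↑l ↑l') :
    Multiset.Rel TyEquiv ↑(l.map f) ↑(l'.map g) := by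
  rw [← Multiset.map_coe, ← Multiset.map_coe]
  exact Multiset.rel_map.mpr (h.mono fun a _ b _ hab => hfg a b hab)

/-- Factors are preserved by ≡, up to pointwise ≡. -/
theorem factorsL_rel {A B : Ty} (h : TyEquiv A B) :
    Multiset.Rel TyEquiv ↑(factorsL A) ↑(factorsL B) := by
  induction h with
  | comm A B =>
    have : ((factorsL A ++ factorsL B : List Ty) : Multiset Ty)
        = ↑(factorsL B ++ factorsL A) := by
      rw [← Multiset.coe_add, ← Multiset.coe_add, add_comm]
    simp only [factorsL]
    rw [this]; exact relRefl _
  | assoc A B C =>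
    simp only [factorsL, List.append_assoc]; exact relRefl _
  | distArr A B C =>
    simp only [factorsL, List.map_append]; exact relRefl _
  | curry A B C =>
    simp only [factorsL, List.map_map]
    exact relMapPointwise (fun t => .curry ..) _
  | allArr X A B hX =>
    simp only [factorsL, List.map_map]
    exact relMapPointwise (fun t => .allArr X A t hX) _
  | allConj X A B =>
    simp only [factorsL, List.map_append]; exact relRefl _
  | refl A => exact relRefl _
  | symm _ ih =>
    exact (Multiset.rel_flip.mpr ih).mono fun a _ b _ hab => hab.symm
  | trans _ _ ih1 ih2 => exact relTrans ih1 ih2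
  | congArr hA _ ihA ihB =>
    simp only [factorsL]
    exact relMapCong (fun a b hab => .congArr hA hab) ihB
  | congConj _ _ ihA ihB =>
    simp only [factorsL]
    rw [← Multiset.coe_add, ← Multiset.coe_add]
    exact ihA.add ihB
  | congAll X _ ih =>
    simp only [factorsL]
    exact relMapCong (fun a b hab => .congAll X hab) ih

theorem rel_conjList : ∀ (l l' : List Ty),
    Multiset.Rel TyEquiv ↑l ↑l' → TyEquiv (conjList l) (conjList l') := by
  intro l
  induction l with
  | nil =>
    intro l' h
    have h0 : l' = [] := by
      have h' : Multiset.Rel TyEquiv 0 ↑l' := h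
      exact (Multiset.coe_eq_zero l').mp (Multiset.rel_zero_left.mp h')
    subst h0
    exact .refl _
  | cons a l ih =>
    intro l' h
    rw [← Multiset.cons_coe] at h
    obtain ⟨b, t, hab, hrest, hmt⟩ := Multiset.rel_cons_left.mp h
    have hrest' : Multiset.Rel TyEquiv ↑l ↑t.toList := by rwa [Multiset.coe_toList]
    have hperm : l'.Perm (b :: t.toList) := by
      rw [← Multiset.coe_eq_coe, ← Multiset.cons_coe, Multiset.coe_toList]
      exact hmt
    refine .trans ?_ (conjList_perm hperm.symm)
    cases l with
    | nil =>
      have ht : t = 0 := by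
        have hc := Multiset.card_eq_card_of_rel hrest
        simpa using hc.symm
      subst ht
      simpa [Multiset.toList_zero, conjList] using hab
    | cons c r =>
      have hne : t.toList ≠ [] := by
        intro e
        have : t = 0 := by rw [← Multiset.coe_toList t, e, Multiset.coe_nil]
        subst this
        have hc := Multiset.card_eq_card_of_rel hrest
        simp at hc
      rw [conjList_cons a (by simp), conjList_cons b hne]
      exact .congConj hab (ih _ hrest')

theorem exists_map_all (X : ℕ) : ∀ (l : List Ty),
    (∀ t ∈ l, ∃ u, t = Ty.all X u) → ∃ m : List Ty, l = m.map (.all X) := by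
  intro l
  induction l with
  | nil => intro _; exact ⟨[], rfl⟩
  | cons a l ih =>
    intro h
    obtain ⟨u, rfl⟩ := h a (by simp)
    obtain ⟨m, rfl⟩ := ih fun t ht => h t (by simp [ht])
    exact ⟨u :: m, rfl⟩

/-- If ∀X.A ≡ B ∧ C then B ≡ ∀X.B', C ≡ ∀X.C' and A ≡ B' ∧ C' for some B', C'. -/
theorem equiv_all_conj (X : ℕ) (A B C : Ty) (h : TyEquiv (.all X A) (.conj B C)) :
    ∃ B' C', TyEquiv B (.all X B') ∧ TyEquiv C (.all X C') ∧ TyEquiv A (.conj B' C') := by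
  have h1 := factorsL_rel h
  simp only [factorsL] at h1
  rw [← Multiset.coe_add] at h1
  have h2 : Multiset.Rel (flip TyEquiv) ((factorsL B : Multiset Ty) + ↑(factorsL C))
      ↑((factorsL A).map (Ty.all X)) := Multiset.rel_flip.mpr h1
  obtain ⟨s1, s2, hB1, hC1, hsum⟩ := Multiset.rel_add_left.mp h2
  have hmemform : ∀ t ∈ s1 + s2, ∃ u, t = Ty.all X u := by
    intro t ht
    rw [← hsum, Multiset.mem_coe, List.mem_map] at ht
    obtain ⟨u, _, rfl⟩ := ht
    exact ⟨u, rfl⟩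
  obtain ⟨mB, hmB⟩ := exists_map_all X s1.toList (fun t ht => hmemform t
    (Multiset.mem_add.mpr (Or.inl (Multiset.mem_toList.mp ht))))
  obtain ⟨mC, hmC⟩ := exists_map_all X s2.toList (fun t ht => hmemform t
    (Multiset.mem_add.mpr (Or.inr (Multiset.mem_toList.mp ht))))
  have hs1 : s1 = ↑(mB.map (Ty.all X)) := by rw [← hmB, Multiset.coe_toList]
  have hs2 : s2 = ↑(mC.map (Ty.all X)) := by rw [← hmC, Multiset.coe_toList]
  have hmBne : mB ≠ [] := by
    intro e
    have hc := Multiset.card_eq_card_of_rel hB1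
    rw [hs1, e] at hc
    simp at hc
    exact factorsL_ne_nil B hc
  have hmCne : mC ≠ [] := by
    intro e
    have hc := Multiset.card_eq_card_of_rel hC1
    rw [hs2, e] at hc
    simp at hc
    exact factorsL_ne_nil C hc
  have hBrel : Multiset.Rel TyEquiv ↑(factorsL B) ↑(mB.map (Ty.all X)) := by
    rw [← hs1]; exact hB1.mono fun a _ b _ hab => TyEquiv.symm hab
  have hCrel : Multiset.Rel TyEquiv ↑(factorsL C) ↑(mC.map (Ty.all X)) := by
    rw [← hs2]; exact hC1.mono fun a _ b _ hab => TyEquiv.symm hab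
  have hBeq : TyEquiv B (.all X (conjList mB)) :=
    .trans (equiv_conjList_factorsL B)
      (.trans (rel_conjList _ _ hBrel) (.symm (conjList_map_all X hmBne)))
  have hCeq : TyEquiv C (.all X (conjList mC)) :=
    .trans (equiv_conjList_factorsL C)
      (.trans (rel_conjList _ _ hCrel) (.symm (conjList_map_all X hmCne)))
  have hAeq : ((factorsL A : List Ty) : Multiset Ty) = ↑(mB ++ mC) := by
    have hinj : Function.Injective (Ty.all X) := fun a b hab => by injection hab
    apply Multiset.map_injective hinj
    rw [Multiset.map_coe, Multiset.map_coe, hsum, hs1, hs2, Multiset.coe_add, ← List.map_append]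
  have hpermA : (factorsL A).Perm (mB ++ mC) := Multiset.coe_eq_coe.mp hAeq
  exact ⟨conjList mB, conjList mC, hBeq, hCeq,
    .trans (equiv_conjList_factorsL A)
      (.trans (conjList_perm hpermA) (conjList_append _ hmBne hmCne))⟩
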